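/- arXiv:math/0701253 — 3 statements merged into one kernel-verified Lean document; each statement's English description precedes it below -/
import Mathlib

section
/- Let Z* be a nonnegative random variable satisfying P(Z* ≥ t) ≤ 4e^{-λt} for all t ≥ 0, where λ > 0, and let 0 < α < 1. Then there is a constant C depending only on α (not on λ), such that for λ small enough, E[exp((Z*)^α)] ≤ exp(C λ^{-α/(1-α)}). -/
open MeasureTheory Real Set

theorem exp_rpow_moment_of_exp_tail (α : ℝ) (hα : α ∈ Set.Ioo (0:ℝ) 1) :
    ∃ C : ℝ, ∃ lam₀ > (0:ℝ), ∀ lam : ℝ, 0 < lam → lam < lam₀ →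
      ∀ (Ω : Type) (_ : MeasurableSpace Ω) (μ : Measure Ω), IsProbabilityMeasure μ →
      ∀ Z : Ω → ℝ, Measurable Z → (∀ ω, 0 ≤ Z ω) →
      (∀ t : ℝ, 0 ≤ t → μ {ω | t ≤ Z ω} ≤ ENNReal.ofReal (4 * Real.exp (-(lam * t)))) →
      (∫ ω, Real.exp (Z ω ^ α) ∂μ) ≤ Real.exp (C * lam ^ (-α / (1 - α))) := by
  obtain ⟨hα0, hα1⟩ := hα
  have h1α : (0:ℝ) < 1 - α := by linarith
  set β : ℝ := α / (1 - α) with hβ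
  have hβ0 : 0 < β := div_pos hα0 h1α
  refine ⟨2 ^ β + Real.log 5, 1, one_pos, ?_⟩
  intro lam hlam hlam1 Ω mΩ μ hμ Z hZm hZ0 htail
  set K : ℝ := 2 ^ β * lam ^ (-β) with hK
  have hKpos : 0 < K := mul_pos (rpow_pos_of_pos two_pos β) (rpow_pos_of_pos hlam _)
  -- pointwise bound : z ^ α ≤ lam/2 * z + K
  have hpt : ∀ z : ℝ, 0 ≤ z → z ^ α ≤ lam / 2 * z + K := by
    intro z hz
    have h2l : (0:ℝ) < 2 / lam := by positivity
    rcases le_or_gt z ((2 / lam) ^ (1 / (1 - α))) with h | h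
    · have h1 : z ^ α ≤ ((2 / lam) ^ (1 / (1 - α))) ^ α := rpow_le_rpow hz h hα0.le
      have e : ((2 / lam) ^ (1 / (1 - α))) ^ α = K := by
        rw [← rpow_mul h2l.le, hK, div_rpow (by norm_num) hlam.le,
          rpow_neg hlam.le, div_eq_mul_inv]
        congr 2 <;> · rw [hβ]; field_simp
      nlinarith [mul_nonneg (by positivity : (0:ℝ) ≤ lam / 2) hz, h1, e.le]
    · have hz0 : 0 < z := lt_of_le_of_lt (by positivity) h
      have h2 : 2 / lam < z ^ (1 - α) := by
        have := rpow_lt_rpow (rpow_nonneg h2l.le _) h h1α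
        rwa [← rpow_mul h2l.le, one_div_mul_cancel h1α.ne', rpow_one] at this
      have h3 : z ^ α * (2 / lam) ≤ z := by
        calc z ^ α * (2 / lam) ≤ z ^ α * z ^ (1 - α) :=
              mul_le_mul_of_nonneg_left h2.le (rpow_nonneg hz α)
          _ = z := by rw [← rpow_add hz0]; norm_num
      have h4 := mul_le_mul_of_nonneg_left h3 (by positivity : (0:ℝ) ≤ lam / 2)
      have h5 : lam / 2 * (z ^ α * (2 / lam)) = z ^ α := by field_simp
      nlinarith [hKpos]
  have hgmeas : Measurable fun ω => Real.exp (lam / 2 * Z ω) :=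
    (hZm.const_mul (lam / 2)).exp
  -- layercake bound for E[exp(lam/2 * Z)]
  have hlayer : (∫⁻ ω, ENNReal.ofReal (Real.exp (lam / 2 * Z ω)) ∂μ)
      ≤ ENNReal.ofReal 5 := by
    rw [lintegral_eq_lintegral_meas_lt μ (ae_of_all _ fun ω => (Real.exp_pos _).le)
      hgmeas.aemeasurable]
    have hsplit : Ioi (0:ℝ) = Ioc 0 1 ∪ Ioi 1 := (Ioc_union_Ioi_eq_Ioi (by norm_num)).symm
    have hdisj : Disjoint (Ioc (0:ℝ) 1) (Ioi 1) := by
      rw [Set.disjoint_left]; rintro x ⟨_, hx1⟩ hx2; exact absurd hx1 (not_le.2 hx2)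
    rw [hsplit, lintegral_union measurableSet_Ioi hdisj]
    have h1 : (∫⁻ t in Ioc (0:ℝ) 1, μ {ω | t < Real.exp (lam / 2 * Z ω)}) ≤ 1 := by
      calc (∫⁻ t in Ioc (0:ℝ) 1, μ {ω | t < Real.exp (lam / 2 * Z ω)})
          ≤ ∫⁻ _ in Ioc (0:ℝ) 1, 1 := lintegral_mono fun t => prob_le_one
        _ = 1 := by simp
    have h2 : (∫⁻ t in Ioi (1:ℝ), μ {ω | t < Real.exp (lam / 2 * Z ω)})
        ≤ ENNReal.ofReal 4 := by
      have hb : ∀ t ∈ Ioi (1:ℝ), μ {ω | t < Real.exp (lam / 2 * Z ω)}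
          ≤ ENNReal.ofReal (4 * t ^ (-2:ℝ)) := by
        intro t ht
        have ht1 : (1:ℝ) < t := ht
        have ht0 : (0:ℝ) < t := lt_trans one_pos ht1
        have hlog : 0 ≤ Real.log t := Real.log_nonneg ht1.le
        have hsub : {ω | t < Real.exp (lam / 2 * Z ω)} ⊆
            {ω | 2 / lam * Real.log t ≤ Z ω} := by
          intro ω hω
          simp only [Set.mem_setOf_eq] at *
          have hlt : Real.log t < lam / 2 * Z ω := (Real.log_lt_iff_lt_exp ht0).2 hω
          have := mul_le_mul_of_nonneg_left hlt.le (by positivity : (0:ℝ) ≤ 2 / lam)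
          calc 2 / lam * Real.log t ≤ 2 / lam * (lam / 2 * Z ω) := this
            _ = Z ω := by field_simp
        calc μ {ω | t < Real.exp (lam / 2 * Z ω)}
            ≤ μ {ω | 2 / lam * Real.log t ≤ Z ω} := measure_mono hsub
          _ ≤ ENNReal.ofReal (4 * Real.exp (-(lam * (2 / lam * Real.log t)))) :=
              htail _ (by positivity)
          _ = ENNReal.ofReal (4 * t ^ (-2:ℝ)) := by
              congr 2
              have e1 : -(lam * (2 / lam * Real.log t)) = Real.log t * (-2) := by
                field_simp
              rw [e1, Real.rpow_def_of_pos ht0]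
      have hint : IntegrableOn (fun t : ℝ => 4 * t ^ (-2:ℝ)) (Ioi 1) :=
        (integrableOn_Ioi_rpow_of_lt (by norm_num) one_pos).const_mul 4
      calc (∫⁻ t in Ioi (1:ℝ), μ {ω | t < Real.exp (lam / 2 * Z ω)})
          ≤ ∫⁻ t in Ioi (1:ℝ), ENNReal.ofReal (4 * t ^ (-2:ℝ)) := by
            refine setLIntegral_mono ?_ hb
            exact ENNReal.measurable_ofReal.comp (by measurability)
        _ = ENNReal.ofReal (∫ t in Ioi (1:ℝ), 4 * t ^ (-2:ℝ)) := by
            rw [ofReal_integral_eq_lintegral_ofReal hint]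
            exact (ae_restrict_iff' measurableSet_Ioi).2 (ae_of_all _ fun t ht => by
              have : (0:ℝ) < t := lt_trans one_pos ht
              positivity)
        _ = ENNReal.ofReal 4 := by
            rw [MeasureTheory.integral_const_mul,
              integral_Ioi_rpow_of_lt (by norm_num) one_pos]
            norm_num
    calc (∫⁻ t in Ioc (0:ℝ) 1, μ {ω | t < Real.exp (lam / 2 * Z ω)})
          + ∫⁻ t in Ioi (1:ℝ), μ {ω | t < Real.exp (lam / 2 * Z ω)}
        ≤ 1 + ENNReal.ofReal 4 := add_le_add h1 h2
      _ = ENNReal.ofReal 5 := by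
          rw [← ENNReal.ofReal_one, ← ENNReal.ofReal_add] <;> norm_num
  -- main estimate
  have hfm : AEStronglyMeasurable (fun ω => Real.exp (Z ω ^ α)) μ :=
    (by fun_prop : Measurable fun ω => Real.exp (Z ω ^ α)).aestronglyMeasurable
  rw [integral_eq_lintegral_of_nonneg_ae (ae_of_all _ fun ω => (Real.exp_pos _).le) hfm]
  have hchain : (∫⁻ ω, ENNReal.ofReal (Real.exp (Z ω ^ α)) ∂μ)
      ≤ ENNReal.ofReal (Real.exp K * 5) := by
    calc (∫⁻ ω, ENNReal.ofReal (Real.exp (Z ω ^ α)) ∂μ)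
        ≤ ∫⁻ ω, ENNReal.ofReal (Real.exp K * Real.exp (lam / 2 * Z ω)) ∂μ := by
          refine lintegral_mono fun ω => ENNReal.ofReal_le_ofReal ?_
          rw [← Real.exp_add]
          exact Real.exp_le_exp.2 (by linarith [hpt (Z ω) (hZ0 ω)])
      _ = ENNReal.ofReal (Real.exp K) *
            ∫⁻ ω, ENNReal.ofReal (Real.exp (lam / 2 * Z ω)) ∂μ := by
          simp_rw [ENNReal.ofReal_mul (Real.exp_pos K).le]
          exact lintegral_const_mul' _ _ ENNReal.ofReal_ne_top
      _ ≤ ENNReal.ofReal (Real.exp K) * ENNReal.ofReal 5 :=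
          mul_le_mul_right hlayer _
      _ = ENNReal.ofReal (Real.exp K * 5) :=
          (ENNReal.ofReal_mul (Real.exp_pos K).le).symm
  have h6 : (∫⁻ ω, ENNReal.ofReal (Real.exp (Z ω ^ α)) ∂μ).toReal ≤ Real.exp K * 5 := by
    have := ENNReal.toReal_mono ENNReal.ofReal_ne_top hchain
    rwa [ENNReal.toReal_ofReal (by positivity)] at this
  refine h6.trans ?_
  have e5 : Real.exp K * 5 = Real.exp (K + Real.log 5) := by
    rw [Real.exp_add, Real.exp_log (by norm_num : (0:ℝ) < 5)]
  rw [e5]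
  apply Real.exp_le_exp.2
  have hlamβ : 1 ≤ lam ^ (-β) :=
    Real.one_le_rpow_of_pos_of_le_one_of_nonpos hlam hlam1.le (by linarith)
  have heβ : -α / (1 - α) = -β := by rw [hβ, neg_div]
  rw [heβ, hK]
  have hlog5 : 0 ≤ Real.log 5 := Real.log_nonneg (by norm_num)
  nlinarith [hlog5, hlamβ]
end

section
/- Let 0 < α < 1 and λ > 0. Then the integral ∫_1^∞ exp(-s + s^α λ^{-α}) ds is finite, and for λ sufficiently small it is bounded by exp(2 C^α λ^{-α/(1-α)}) where C = 2^{1/(1-α)}. -/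
open MeasureTheory

lemma key_pt (α : ℝ) (hα0 : 0 < α) (hα1 : α < 1) {c : ℝ} (hc : 0 < c) {s : ℝ} (hs : 0 < s) :
    s ^ α * c ≤ s / 2 + c * (2 * c) ^ (α / (1 - α)) := by
  have h1α : (0:ℝ) < 1 - α := by linarith
  have h2c : (0:ℝ) < 2 * c := by linarith
  rcases le_total s ((2*c) ^ ((1-α)⁻¹)) with h | h
  · have hpow : s ^ α ≤ (2*c) ^ (α / (1-α)) := by
      have h2 : s ^ α ≤ ((2*c) ^ ((1-α)⁻¹)) ^ α :=
        Real.rpow_le_rpow hs.le h hα0.le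
      rwa [← Real.rpow_mul h2c.le, inv_mul_eq_div] at h2
    have : s ^ α * c ≤ (2*c) ^ (α/(1-α)) * c :=
      mul_le_mul_of_nonneg_right hpow hc.le
    nlinarith [hs, Real.rpow_nonneg h2c.le (α/(1-α))]
  · have h2 : 2 * c ≤ s ^ (1 - α) := by
      have := Real.rpow_le_rpow (Real.rpow_nonneg h2c.le _) h h1α.le
      rwa [← Real.rpow_mul h2c.le, inv_mul_cancel₀ h1α.ne', Real.rpow_one] at this
    have hsplit : s ^ α * s ^ (1 - α) = s := by
      rw [← Real.rpow_add hs]; simp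
    have hle : s ^ α * (2 * c) ≤ s ^ α * s ^ (1-α) :=
      mul_le_mul_of_nonneg_left h2 (Real.rpow_nonneg hs.le _)
    rw [hsplit] at hle
    nlinarith [mul_pos hc (Real.rpow_pos_of_pos h2c (α/(1-α)))]

theorem integral_exp_rpow_bound (α : ℝ) (hα : α ∈ Set.Ioo (0:ℝ) 1) :
    (∀ lam : ℝ, 0 < lam →
      IntegrableOn (fun s : ℝ => Real.exp (-s + s ^ α * lam ^ (-α))) (Set.Ioi 1) volume) ∧
    ∃ lam₀ > (0:ℝ), ∀ lam : ℝ, 0 < lam → lam < lam₀ →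
      (∫ s in Set.Ioi (1:ℝ), Real.exp (-s + s ^ α * lam ^ (-α)))
        ≤ Real.exp (2 * ((2:ℝ) ^ (1 / (1 - α))) ^ α * lam ^ (-α / (1 - α))) := by
  obtain ⟨hα0, hα1⟩ := hα
  have h1α : (0:ℝ) < 1 - α := by linarith
  have key : ∀ lam : ℝ, 0 < lam → ∀ s ∈ Set.Ioi (1:ℝ),
      Real.exp (-s + s ^ α * lam ^ (-α)) ≤
        Real.exp (lam ^ (-α) * (2 * lam ^ (-α)) ^ (α/(1-α))) * Real.exp (-(2⁻¹ * s)) := by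
    intro lam hlam s hs
    have hs1 : (1:ℝ) < s := hs
    have hc : (0:ℝ) < lam ^ (-α) := Real.rpow_pos_of_pos hlam _
    rw [← Real.exp_add]
    apply Real.exp_le_exp.2
    have := key_pt α hα0 hα1 hc (by linarith : (0:ℝ) < s)
    linarith
  have hmeas : ∀ lam : ℝ, Measurable (fun s : ℝ => Real.exp (-s + s ^ α * lam ^ (-α))) := by
    intro lam; fun_prop
  have hgint : IntegrableOn (fun s : ℝ => Real.exp (-(2⁻¹ * s))) (Set.Ioi 1) volume := by
    have := exp_neg_integrableOn_Ioi (1:ℝ) (by norm_num : (0:ℝ) < 2⁻¹)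
    simpa [neg_mul] using this
  have hint : ∀ lam : ℝ, 0 < lam →
      IntegrableOn (fun s : ℝ => Real.exp (-s + s ^ α * lam ^ (-α))) (Set.Ioi 1) volume := by
    intro lam hlam
    apply Integrable.mono' (g := fun s => Real.exp (lam ^ (-α) * (2 * lam ^ (-α)) ^ (α/(1-α))) *
      Real.exp (-(2⁻¹ * s))) (hgint.const_mul _) ((hmeas lam).aestronglyMeasurable.restrict)
    filter_upwards [ae_restrict_mem measurableSet_Ioi] with s hs
    rw [Real.norm_eq_abs, Real.abs_exp]
    exact key lam hlam s hs
  refine ⟨hint, 1, one_pos, fun lam hlam hlam1 => ?_⟩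
  set c := lam ^ (-α) with hcdef
  have hc : (0:ℝ) < c := Real.rpow_pos_of_pos hlam _
  set M := c * (2 * c) ^ (α/(1-α)) with hMdef
  have hc1 : (1:ℝ) ≤ c :=
    Real.one_le_rpow_of_pos_of_le_one_of_nonpos hlam hlam1.le (by linarith)
  have hM1 : 1 ≤ M := by
    have h2c1 : (1:ℝ) ≤ 2 * c := by linarith
    have : (1:ℝ) ≤ (2*c) ^ (α/(1-α)) :=
      Real.one_le_rpow h2c1 (by positivity)
    nlinarith
  have hexp : 2 * ((2:ℝ) ^ (1 / (1 - α))) ^ α * lam ^ (-α / (1 - α)) = 2 * M := by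
    have h2 : ((2:ℝ) ^ (1 / (1 - α))) ^ α = (2:ℝ) ^ (α/(1-α)) := by
      rw [← Real.rpow_mul (by norm_num)]
      congr 1; field_simp
    have h3 : c ^ (α/(1-α)) = lam ^ (-α * (α/(1-α))) := by
      rw [Real.rpow_mul hlam.le]
    have h4 : M = 2 ^ (α/(1-α)) * lam ^ (-α / (1-α)) := by
      rw [hMdef, Real.mul_rpow (by norm_num) hc.le, h3, hcdef, mul_comm,
        mul_assoc, ← Real.rpow_add hlam]
      congr 1
      field_simp; ring_nf
    rw [h2, h4]; ring
  rw [hexp]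
  calc (∫ s in Set.Ioi (1:ℝ), Real.exp (-s + s ^ α * lam ^ (-α)))
      ≤ ∫ s in Set.Ioi (1:ℝ), Real.exp M * Real.exp (-(2⁻¹ * s)) := by
        apply setIntegral_mono_on (hint lam hlam) (hgint.const_mul _) measurableSet_Ioi
        exact key lam hlam
    _ = Real.exp M * (2 * Real.exp (-2⁻¹)) := by
        rw [integral_const_mul]
        congr 1
        have := integral_comp_mul_left_Ioi (fun x => Real.exp (-x)) 1
          (by norm_num : (0:ℝ) < 2⁻¹)
        simp only [smul_eq_mul] at this
        rw [this, integral_exp_neg_Ioi]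
        norm_num
    _ ≤ Real.exp (2 * M) := by
        have h1 : Real.exp (-2⁻¹) ≤ 1 := by
          rw [show (1:ℝ) = Real.exp 0 by simp]
          exact Real.exp_le_exp.2 (by norm_num)
        have h2 : (2:ℝ) ≤ Real.exp 1 := by
          have := Real.add_one_le_exp (1:ℝ); linarith
        have h3 : Real.exp 1 ≤ Real.exp M := Real.exp_le_exp.2 hM1
        have h4 : 2 * Real.exp (-2⁻¹) ≤ Real.exp M := by
          nlinarith [Real.exp_pos (-2⁻¹)]
        calc Real.exp M * (2 * Real.exp (-2⁻¹)) ≤ Real.exp M * Real.exp M :=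
              mul_le_mul_of_nonneg_left h4 (Real.exp_pos M).le
          _ = Real.exp (2 * M) := by rw [← Real.exp_add]; ring_nf
end

section
/- Let ξ_L = {x_{-m}, ..., x_n} ⊂ [-L/2, L/2] be a finite set of points with consecutive gaps Z_i = x_{i+1} - x_i, let α > 0, and consider the spectral gap of the generator L_L f(x) = Σ_{y∈ξ_L} e^{-|x-y|^α}(f(y)-f(x)). Suppose Σ_{i} e^{Z_i^α} ≤ K L and #(ξ_L) ≤ C₁ L. Then for any f: ξ_L → ℝ, Σ_{x,y∈ξ_L} (f(x)-f(y))² ≤ C₂ L³ Σ_{i} e^{-Z_i^α}(f(x_i)-f(x_{i+1}))², where C₂ depends only on K and C₁. Consequently the Poincaré constant γ(L) ≤ C L². -/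
/-! Join `x i` to `x j` by the chain of consecutive points. Cauchy–Schwarz with weights
`exp (Z k ^ α)` bounds every `(f i - f j) ^ 2` by `(∑ k, exp (Z k ^ α)) * S ≤ K * L * S`, where
`S = ∑ k, exp (-Z k ^ α) * (f k - f (k + 1)) ^ 2`. Summing over the at most `(C₁ * L) ^ 2` pairs gives
the `L ^ 3` bound, and since the nearest-neighbour terms of the Dirichlet form already make up `S`,
dividing by `m + 1` gives the Poincaré bound with constant `K * C₁ * L ^ 2`. -/

open Finset

section PathEstimate

variable (g w : ℕ → ℝ)

theorem sq_sub_le_sum_mul_sum_inv_mul {i j : ℕ} (hij : i ≤ j) (hw : ∀ k ∈ Ico i j, 0 < w k) :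
    (g j - g i) ^ 2 ≤ (∑ k ∈ Ico i j, w k) * ∑ k ∈ Ico i j, (w k)⁻¹ * (g (k + 1) - g k) ^ 2 := by
  rw [← sum_Ico_sub g hij]
  refine sum_sq_le_sum_mul_sum_of_sq_le_mul _ (fun k hk => (hw k hk).le)
    (fun k hk => mul_nonneg (inv_nonneg.2 (hw k hk).le) (sq_nonneg _)) fun k hk => ?_
  rw [← mul_assoc, mul_inv_cancel₀ (hw k hk).ne', one_mul]

theorem sq_sub_le_sum_range_mul_sum_range {m i j : ℕ} (hi : i ≤ m) (hj : j ≤ m)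
    (hw : ∀ k < m, 0 < w k) :
    (g i - g j) ^ 2 ≤ (∑ k ∈ range m, w k) * ∑ k ∈ range m, (w k)⁻¹ * (g (k + 1) - g k) ^ 2 := by
  wlog hij : j ≤ i generalizing i j
  · rw [sub_sq_comm]
    exact this hj hi (le_of_not_ge hij)
  have hsub : Ico j i ⊆ range m := fun k hk => mem_range.2 (by grind)
  have hw' : ∀ k ∈ range m, 0 < w k := fun k hk => hw k (mem_range.1 hk)
  have hterm : ∀ k ∈ range m, 0 ≤ (w k)⁻¹ * (g (k + 1) - g k) ^ 2 :=
    fun k hk => mul_nonneg (inv_nonneg.2 (hw' k hk).le) (sq_nonneg _)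
  calc (g i - g j) ^ 2
      ≤ (∑ k ∈ Ico j i, w k) * ∑ k ∈ Ico j i, (w k)⁻¹ * (g (k + 1) - g k) ^ 2 :=
        sq_sub_le_sum_mul_sum_inv_mul g w hij fun k hk => hw' k (hsub hk)
    _ ≤ _ := mul_le_mul
        (sum_le_sum_of_subset_of_nonneg hsub fun k hk _ => (hw' k hk).le)
        (sum_le_sum_of_subset_of_nonneg hsub fun k hk _ => hterm k hk)
        (sum_nonneg fun k hk => hterm k (hsub hk)) (sum_nonneg fun k hk => (hw' k hk).le)

end PathEstimate

theorem Fin.sq_sub_le_sum_mul_sum_inv_mul {m : ℕ} (f : Fin (m + 1) → ℝ) (w : Fin m → ℝ)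
    (hw : ∀ k, 0 < w k) (i j : Fin (m + 1)) :
    (f i - f j) ^ 2 ≤ (∑ k, w k) * ∑ k, (w k)⁻¹ * (f k.castSucc - f k.succ) ^ 2 := by
  let g : ℕ → ℝ := fun k => if h : k < m + 1 then f ⟨k, h⟩ else 0
  let v : ℕ → ℝ := fun k => if h : k < m then w ⟨k, h⟩ else 0
  have := sq_sub_le_sum_range_mul_sum_range g v i.is_le j.is_le fun k hk => by simp [v, hk, hw]
  simpa [g, v, Finset.sum_range, Fin.is_le, ← Fin.succ_mk, ← Fin.castSucc_mk,
    sub_sq_comm (f (Fin.castSucc _))] using this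

theorem Fin.sum_castSucc_succ_le_sum_sum {m : ℕ} (a : Fin (m + 1) → Fin (m + 1) → ℝ)
    (ha : ∀ i j, 0 ≤ a i j) : ∑ k : Fin m, a k.castSucc k.succ ≤ ∑ i, ∑ j, a i j :=
  calc ∑ k : Fin m, a k.castSucc k.succ
      ≤ ∑ k : Fin m, ∑ j, a k.castSucc j :=
        sum_le_sum fun k _ => single_le_sum (fun j _ => ha _ j) (mem_univ _)
    _ ≤ ∑ i, ∑ j, a i j := by
        rw [Fin.sum_univ_castSucc (fun i => ∑ j, a i j)]
        exact le_add_of_nonneg_right (sum_nonneg fun j _ => ha _ j)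

theorem poincare_path_bound_general (α : ℝ) (K C₁ : ℝ) :
    ∃ C₂ C : ℝ, ∀ (L : ℝ), 0 < L → ∀ (m : ℕ) (x : Fin (m + 1) → ℝ),
      StrictMono x →
      (∀ i, x i ∈ Set.Icc (-L / 2) (L / 2)) →
      (∑ i : Fin m, Real.exp ((x i.succ - x i.castSucc) ^ α) ≤ K * L) →
      ((m : ℝ) + 1 ≤ C₁ * L) →
      ∀ f : Fin (m + 1) → ℝ,
        (∑ i : Fin (m + 1), ∑ j : Fin (m + 1), (f i - f j) ^ 2)
          ≤ C₂ * L ^ 3 *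
            ∑ i : Fin m, Real.exp (-((x i.succ - x i.castSucc) ^ α)) *
              (f i.castSucc - f i.succ) ^ 2 ∧
        (1 / ((m : ℝ) + 1)) *
            (∑ i : Fin (m + 1), ∑ j : Fin (m + 1), (f i - f j) ^ 2)
          ≤ C * L ^ 2 *
            ∑ i : Fin (m + 1), ∑ j : Fin (m + 1),
              Real.exp (-(|x i - x j| ^ α)) * (f i - f j) ^ 2 := by
  refine ⟨K * C₁ ^ 2, K * C₁, fun L hL m x hx _ hK hC₁ f => ?_⟩
  set S := ∑ i : Fin m,
    Real.exp (-((x i.succ - x i.castSucc) ^ α)) * (f i.castSucc - f i.succ) ^ 2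
  have hS : 0 ≤ S := by positivity
  have hKL : 0 ≤ K * L := (sum_nonneg fun _ _ => (Real.exp_pos _).le).trans hK
  have hK₀ : 0 ≤ K := nonneg_of_mul_nonneg_left hKL hL
  have hC₁₀ : 0 ≤ C₁ :=
    nonneg_of_mul_nonneg_left ((by positivity : (0 : ℝ) ≤ m + 1).trans hC₁) hL
  have hpair : ∀ i j, (f i - f j) ^ 2 ≤ K * L * S := by
    intro i j
    have := Fin.sq_sub_le_sum_mul_sum_inv_mul f (fun k => Real.exp ((x k.succ - x k.castSucc) ^ α))
      (fun _ => Real.exp_pos _) i j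
    simp only [← Real.exp_neg] at this
    exact this.trans (mul_le_mul_of_nonneg_right hK hS)
  have hsum : ∑ i, ∑ j, (f i - f j) ^ 2 ≤ ((m : ℝ) + 1) ^ 2 * (K * L * S) := by
    calc _ ≤ ∑ _i : Fin (m + 1), ∑ _j : Fin (m + 1), K * L * S :=
          sum_le_sum fun i _ => sum_le_sum fun j _ => hpair i j
      _ = _ := by
          simp only [sum_const, card_univ, Fintype.card_fin, nsmul_eq_mul, Nat.cast_add,
            Nat.cast_one]
          ring
  have hS_le : S ≤ ∑ i, ∑ j, Real.exp (-(|x i - x j| ^ α)) * (f i - f j) ^ 2 := by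
    refine le_of_eq_of_le ?_ (Fin.sum_castSucc_succ_le_sum_sum _ fun i j => by positivity)
    refine sum_congr rfl fun k _ => ?_
    rw [abs_sub_comm, abs_of_pos (sub_pos.2 (hx k.castSucc_lt_succ))]
  constructor
  · calc _ ≤ ((m : ℝ) + 1) ^ 2 * (K * L * S) := hsum
      _ ≤ (C₁ * L) ^ 2 * (K * L * S) := by gcongr
      _ = K * C₁ ^ 2 * L ^ 3 * S := by ring
  · calc _ ≤ 1 / ((m : ℝ) + 1) * (((m : ℝ) + 1) ^ 2 * (K * L * S)) := by gcongr
      _ = ((m : ℝ) + 1) * (K * L * S) := by field_simp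
      _ ≤ C₁ * L * (K * L * S) := by gcongr
      _ = K * C₁ * L ^ 2 * S := by ring
      _ ≤ _ := by gcongr

theorem poincare_path_bound (α : ℝ) (hα : 0 < α) (K C₁ : ℝ) :
    ∃ C₂ C : ℝ, ∀ (L : ℝ), 0 < L → ∀ (m : ℕ) (x : Fin (m + 1) → ℝ),
      StrictMono x →
      (∀ i, x i ∈ Set.Icc (-L / 2) (L / 2)) →
      (∑ i : Fin m, Real.exp ((x i.succ - x i.castSucc) ^ α) ≤ K * L) →
      ((m : ℝ) + 1 ≤ C₁ * L) →
      ∀ f : Fin (m + 1) → ℝ,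
        (∑ i : Fin (m + 1), ∑ j : Fin (m + 1), (f i - f j) ^ 2)
          ≤ C₂ * L ^ 3 *
            ∑ i : Fin m, Real.exp (-((x i.succ - x i.castSucc) ^ α)) *
              (f i.castSucc - f i.succ) ^ 2 ∧
        (1 / ((m : ℝ) + 1)) *
            (∑ i : Fin (m + 1), ∑ j : Fin (m + 1), (f i - f j) ^ 2)
          ≤ C * L ^ 2 *
            ∑ i : Fin (m + 1), ∑ j : Fin (m + 1),
              Real.exp (-(|x i - x j| ^ α)) * (f i - f j) ^ 2 :=
  poincare_path_bound_general α K C₁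
end
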